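/- arXiv:1601.03424 — 5 statements merged into one kernel-verified Lean document; each statement's English description precedes it below -/
import Mathlib

section
/- Let F be a field and let P ∈ F[X] be a monic irreducible polynomial with P ≠ X. Then P fails to have good heredity over F if and only if there exist positive integers n_0 = 1 < n_1 < n_2 < ⋯ with n_i dividing n_{i+1} for every i, and monic irreducible polynomials Q_i ∈ F[X] such that each Q_i divides P(X^{n_i}) and, for every i, Q_{i+1} properly divides Q_i(X^{n_{i+1}/n_i}) (that is, Q_{i+1} divides it and deg Q_{i+1} < (n_{i+1}/n_i)·deg Q_i). -/
open Polynomial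

/-- `a` is a root of unity, i.e. a torsion element of the multiplicative monoid. -/
def IsRootOfUnityElem {F : Type*} [Monoid F] (a : F) : Prop := ∃ n : ℕ, 0 < n ∧ a ^ n = 1

/-- `P` is hereditarily irreducible over `F`: `P(X^n)` is irreducible for every `n ≥ 1`. -/
def HeredIrreducible {F : Type*} [Field F] (P : F[X]) : Prop :=
  ∀ n : ℕ, 0 < n → Irreducible (P.comp (X ^ n))

/-- `P` has good heredity over `F`: some `P(X^n)` is a product of hereditarily
irreducible polynomials. -/
def HasGoodHeredity {F : Type*} [Field F] (P : F[X]) : Prop :=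
  ∃ n : ℕ, 0 < n ∧ ∃ l : Multiset F[X],
    (∀ Q ∈ l, HeredIrreducible Q) ∧ P.comp (X ^ n) = l.prod

/-- `a` is rootless in `F`: only finitely many positive `n` admit a solution of `x^n = a`. -/
def RootlessElem {F : Type*} [Field F] (a : F) : Prop :=
  {n : ℕ | 0 < n ∧ ∃ x : F, x ^ n = a}.Finite

/-- `a` is rootless modtor in `F`: only finitely many positive `n` admit a root of unity `ζ`
and `g` with `g^n = ζ * a`. -/
def RootlessModtorElem {F : Type*} [Field F] (a : F) : Prop :=
  {n : ℕ | 0 < n ∧ ∃ ζ g : F, IsRootOfUnityElem ζ ∧ g ^ n = ζ * a}.Finite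

/-- `a` is very rootless: it is not a proper power. -/
def VeryRootless {F : Type*} [Field F] (a : F) : Prop :=
  ¬ ∃ (g : F) (n : ℕ), 2 ≤ n ∧ a = g ^ n

/-- `a` is very rootless modtor: it is not a proper power times a root of unity. -/
def VeryRootlessModtor {F : Type*} [Field F] (a : F) : Prop :=
  ¬ ∃ (ζ g : F) (n : ℕ), IsRootOfUnityElem ζ ∧ 2 ≤ n ∧ a = ζ * g ^ n

/-- A field is rootless if all its elements that are neither zero nor roots of unity are. -/
def RootlessField (F : Type*) [Field F] : Prop :=
  ∀ a : F, a ≠ 0 → ¬ IsRootOfUnityElem a → RootlessElem a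

/-- A field is rootless modtor if all its elements that are neither zero nor
roots of unity are. -/
def RootlessModtorField (F : Type*) [Field F] : Prop :=
  ∀ a : F, a ≠ 0 → ¬ IsRootOfUnityElem a → RootlessModtorElem a

/-- A field has good heredity if every polynomial none of whose roots in an algebraic
closure is zero or a root of unity has good heredity. -/
def GoodHeredityField (F : Type*) [Field F] : Prop :=
  ∀ P : F[X],
    (∀ b : AlgebraicClosure F, Polynomial.aeval b P = 0 → b ≠ 0 ∧ ¬ IsRootOfUnityElem b) →
    HasGoodHeredity P

/-! If `P(X^m)` is a product of hereditarily irreducible polynomials `S_j`, every irreducible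
factor of `P(X^(m n))` is associated to some `S_j(X^n)` and so stays irreducible under every
further substitution `X ↦ X^k`. Hence for a divisor `Q` of `P(X^(m n))`, `Q(X^k)` has as many
irreducible factors as `Q`, while a divisor of `Q(X^k)` of smaller degree has fewer: along a chain
of proper divisions the number of irreducible factors of `Q_i(X^m)` would decrease forever.

Conversely, if a monic irreducible `Q` lacks good heredity, some `Q(X^k)` is reducible; since good
heredity is stable under products, one of its irreducible factors, necessarily of degree
`< k deg Q`, again lacks good heredity, and dependent choice yields the chain. -/

open UniqueFactorizationMonoid

theorem exists_seq_of_forall_exists {α : Type*} {p : α → Prop} {r : α → α → Prop}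
    (h : ∀ a, p a → ∃ b, p b ∧ r a b) {a : α} (ha : p a) :
    ∃ f : ℕ → α, f 0 = a ∧ ∀ n, p (f n) ∧ r (f n) (f (n + 1)) := by
  choose! g hgp hgr using h
  have hp : ∀ n, p (g^[n] a) := by
    intro n
    induction n with
    | zero => exact ha
    | succ n ih => rw [Function.iterate_succ_apply']; exact hgp _ ih
  refine ⟨fun n => g^[n] a, rfl, fun n => ⟨hp n, ?_⟩⟩
  dsimp only
  rw [Function.iterate_succ_apply']
  exact hgr _ (hp n)

section

variable {F : Type*} [Field F] {p q : F[X]} {k : ℕ}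

lemma Polynomial.expand_expand_comm (a b : ℕ) (p : F[X]) :
    expand F a (expand F b p) = expand F b (expand F a p) := by
  rw [expand_expand, expand_expand, mul_comm]

lemma HeredIrreducible.irreducible (hp : HeredIrreducible p) : Irreducible p := by
  simpa using hp 1 one_pos

lemma HeredIrreducible.expand (hp : HeredIrreducible p) (hk : 0 < k) :
    HeredIrreducible (Polynomial.expand F k p) := fun n hn => by
  rw [← expand_eq_comp_X_pow, expand_expand]
  exact hp _ (mul_pos hn hk)

lemma HeredIrreducible.of_associated (hp : HeredIrreducible p) (h : Associated p q) :
    HeredIrreducible q := fun n hn =>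
  (h.map (Polynomial.expand F n)).irreducible (hp n hn)

variable (F) in
noncomputable def heredProducts : Submonoid F[X] :=
  Submonoid.closure {Q | HeredIrreducible Q}

lemma HeredIrreducible.mem_heredProducts (hp : HeredIrreducible p) : p ∈ heredProducts F :=
  Submonoid.subset_closure hp

lemma hasGoodHeredity_iff : HasGoodHeredity p ↔ ∃ m, 0 < m ∧ expand F m p ∈ heredProducts F := by
  refine exists_congr fun m => and_congr_right fun _ => ⟨?_, fun h => ?_⟩
  · rintro ⟨l, hl, he⟩
    rw [expand_eq_comp_X_pow, he]
    exact Submonoid.multiset_prod_mem _ _ fun Q hQ => (hl Q hQ).mem_heredProducts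
  · obtain ⟨l, hl, he⟩ := Submonoid.exists_multiset_of_mem_closure h
    exact ⟨l, hl, he.symm⟩

lemma expand_mem_heredProducts (hk : 0 < k) (hp : p ∈ heredProducts F) :
    expand F k p ∈ heredProducts F := by
  induction hp using Submonoid.closure_induction with
  | mem Q hQ => exact (HeredIrreducible.expand hQ hk).mem_heredProducts
  | one => simp [one_mem]
  | mul a b _ _ ha hb => simpa using mul_mem ha hb

lemma HeredIrreducible.of_dvd_mem_heredProducts {T H : F[X]} (hT : Irreducible T)
    (hH : H ∈ heredProducts F) (h : T ∣ H) : HeredIrreducible T := by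
  obtain ⟨l, hl, rfl⟩ := Submonoid.exists_multiset_of_mem_closure hH
  obtain ⟨S, hS, hTS⟩ := hT.prime.exists_mem_multiset_dvd h
  exact (hl S hS).of_associated (hT.associated_of_dvd (hl S hS).irreducible hTS).symm

lemma HeredIrreducible.hasGoodHeredity (hp : HeredIrreducible p) : HasGoodHeredity p :=
  hasGoodHeredity_iff.mpr ⟨1, one_pos, by simpa using hp.mem_heredProducts⟩

lemma HasGoodHeredity.mul (hp : HasGoodHeredity p) (hq : HasGoodHeredity q) :
    HasGoodHeredity (p * q) := by
  obtain ⟨m, hm, hpm⟩ := hasGoodHeredity_iff.mp hp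
  obtain ⟨m', hm', hqm⟩ := hasGoodHeredity_iff.mp hq
  refine hasGoodHeredity_iff.mpr ⟨m' * m, mul_pos hm' hm, ?_⟩
  rw [map_mul, expand_mul, mul_comm m' m, expand_mul]
  exact mul_mem (expand_mem_heredProducts hm' hpm) (expand_mem_heredProducts hm hqm)

lemma HasGoodHeredity.multiset_prod {l : Multiset F[X]} (h : ∀ q ∈ l, HasGoodHeredity q) :
    HasGoodHeredity l.prod := by
  induction l using Multiset.induction with
  | empty => exact hasGoodHeredity_iff.mpr ⟨1, one_pos, by simp [one_mem]⟩
  | cons a s ih =>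
    rw [Multiset.prod_cons]
    exact (h a (Multiset.mem_cons_self a s)).mul (ih fun q hq => h q (Multiset.mem_cons_of_mem hq))

lemma HasGoodHeredity.of_expand (hk : 0 < k) (h : HasGoodHeredity (expand F k p)) :
    HasGoodHeredity p := by
  obtain ⟨m, hm, hmem⟩ := hasGoodHeredity_iff.mp h
  exact hasGoodHeredity_iff.mpr ⟨m * k, mul_pos hm hk, by rwa [expand_mul]⟩

lemma exists_one_lt_not_irreducible_expand (hp : Irreducible p) (h : ¬HasGoodHeredity p) :
    ∃ k, 1 < k ∧ ¬Irreducible (expand F k p) := by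
  by_contra! hall
  refine h (HeredIrreducible.hasGoodHeredity fun n hn => ?_)
  obtain rfl | hn1 := (Nat.one_le_of_lt hn).eq_or_lt
  · simpa using hp
  · exact hall n hn1

structure IsBadFactor (P : F[X]) (n : ℕ) (Q : F[X]) : Prop where
  pos : 0 < n
  monic : Q.Monic
  irreducible : Irreducible Q
  dvd : Q ∣ expand F n P
  not_hasGoodHeredity : ¬HasGoodHeredity Q

variable [DecidableEq F]

lemma exists_mem_normalizedFactors_not_hasGoodHeredity (hp : p.Monic) (h : ¬HasGoodHeredity p) :
    ∃ R ∈ normalizedFactors p, ¬HasGoodHeredity R := by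
  by_contra! hall
  apply h
  rw [← hp.normalize_eq_self, ← prod_normalizedFactors_eq hp.ne_zero]
  exact HasGoodHeredity.multiset_prod hall

lemma natDegree_lt_of_mem_normalizedFactors {R : F[X]} (hp : ¬Irreducible p)
    (hR : R ∈ normalizedFactors p) : R.natDegree < p.natDegree := by
  have hp0 : p ≠ 0 := by rintro rfl; simp at hR
  obtain ⟨hRirr, hRm, hRp⟩ := (Polynomial.mem_normalizedFactors_iff hp0).mp hR
  by_contra! hle
  refine hp ?_
  rw [eq_mul_leadingCoeff_of_monic_of_dvd_of_natDegree_le hRm hRp hle]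
  have hunit : IsUnit (C p.leadingCoeff) := isUnit_C.mpr (leadingCoeff_ne_zero.mpr hp0).isUnit
  exact (associated_mul_unit_right R _ hunit).irreducible hRirr

lemma exists_dvd_expand_not_hasGoodHeredity (hm : p.Monic) (hp : Irreducible p)
    (h : ¬HasGoodHeredity p) :
    ∃ k R, 1 < k ∧ R.Monic ∧ Irreducible R ∧ R ∣ expand F k p ∧
      R.natDegree < k * p.natDegree ∧ ¬HasGoodHeredity R := by
  obtain ⟨k, hk, hred⟩ := exists_one_lt_not_irreducible_expand hp h
  have hkm : (expand F k p).Monic := hm.expand (by omega)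
  obtain ⟨R, hR, hRbad⟩ :=
    exists_mem_normalizedFactors_not_hasGoodHeredity hkm fun hg => h (hg.of_expand (by omega))
  obtain ⟨hRirr, hRm, hRdvd⟩ := (Polynomial.mem_normalizedFactors_iff hkm.ne_zero).mp hR
  refine ⟨k, R, hk, hRm, hRirr, hRdvd, ?_, hRbad⟩
  simpa [natDegree_expand, mul_comm] using natDegree_lt_of_mem_normalizedFactors hred hR

lemma card_normalizedFactors_expand (hp : p ≠ 0)
    (h : ∀ T ∈ normalizedFactors p, Irreducible (expand F k T)) :
    Multiset.card (normalizedFactors (expand F k p)) = Multiset.card (normalizedFactors p) := by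
  have hassoc : Associated ((normalizedFactors p).map (expand F k)).prod (expand F k p) := by
    rw [← map_multiset_prod]
    exact (prod_normalizedFactors hp).map _
  rw [← hassoc.normalizedFactors_eq, normalizedFactors_prod_eq _ (by simpa using h)]
  simp

lemma card_normalizedFactors_lt_of_dvd (hq : q ≠ 0) (h : p ∣ q)
    (hdeg : p.natDegree < q.natDegree) :
    Multiset.card (normalizedFactors p) < Multiset.card (normalizedFactors q) := by
  have hp : p ≠ 0 := ne_zero_of_dvd_ne_zero hq h
  refine Multiset.card_lt_card ((dvdNotUnit_iff_normalizedFactors_lt_normalizedFactors hp hq).mp ?_)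
  exact dvdNotUnit_of_dvd_of_not_dvd h fun hqp => hdeg.not_ge (natDegree_le_of_dvd hqp hp)

lemma card_normalizedFactors_lt_of_dvd_expand {H R : F[X]} (hH : H ∈ heredProducts F)
    (hpH : p ∣ H) (hp : p ≠ 0) (hk : 0 < k) (hR : R ∣ expand F k p)
    (hdeg : R.natDegree < k * p.natDegree) :
    Multiset.card (normalizedFactors R) < Multiset.card (normalizedFactors p) := by
  have hfac : ∀ T ∈ normalizedFactors p, Irreducible (expand F k T) := fun T hT =>
    HeredIrreducible.of_dvd_mem_heredProducts (irreducible_of_normalized_factor T hT) hH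
      ((dvd_of_mem_normalizedFactors hT).trans hpH) k hk
  rw [← card_normalizedFactors_expand hp hfac]
  exact card_normalizedFactors_lt_of_dvd ((expand_eq_zero hk).not.mpr hp) hR
    (by rwa [natDegree_expand, mul_comm])

lemma IsBadFactor.exists_next {P : F[X]} {n : ℕ} (h : IsBadFactor P n q) :
    ∃ k R, 1 < k ∧ IsBadFactor P (n * k) R ∧ R ∣ expand F k q ∧
      R.natDegree < k * q.natDegree := by
  obtain ⟨k, R, hk, hRm, hR, hRq, hdeg, hRbad⟩ :=
    exists_dvd_expand_not_hasGoodHeredity h.monic h.irreducible h.not_hasGoodHeredity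
  have hRP : R ∣ expand F (n * k) P := by
    rw [mul_comm n k, expand_mul]
    exact hRq.trans (_root_.map_dvd (expand F k) h.dvd)
  exact ⟨k, R, hk, ⟨mul_pos h.pos (by omega), hRm, hR, hRP, hRbad⟩, hRq, hdeg⟩

theorem exists_chain_of_not_hasGoodHeredity {P : F[X]} (hm : P.Monic) (hirr : Irreducible P)
    (hbad : ¬HasGoodHeredity P) :
    ∃ (n : ℕ → ℕ) (Q : ℕ → F[X]),
      n 0 = 1 ∧ (∀ i, 0 < n i) ∧ (∀ i, n i < n (i + 1)) ∧ (∀ i, n i ∣ n (i + 1)) ∧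
      (∀ i, (Q i).Monic) ∧ (∀ i, Irreducible (Q i)) ∧ (∀ i, Q i ∣ expand F (n i) P) ∧
      (∀ i, Q (i + 1) ∣ expand F (n (i + 1) / n i) (Q i) ∧
        (Q (i + 1)).natDegree < (n (i + 1) / n i) * (Q i).natDegree) := by
  obtain ⟨f, hf0, hf⟩ := exists_seq_of_forall_exists
    (p := fun t : ℕ × F[X] => IsBadFactor P t.1 t.2)
    (r := fun t t' => ∃ k, 1 < k ∧ t'.1 = t.1 * k ∧ t'.2 ∣ expand F k t.2 ∧
      t'.2.natDegree < k * t.2.natDegree)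
    (fun t ht => by
      obtain ⟨k, R, hk, hR, hRq, hdeg⟩ := ht.exists_next
      exact ⟨(t.1 * k, R), hR, k, hk, rfl, hRq, hdeg⟩)
    (a := (1, P)) ⟨one_pos, hm, hirr, by simp, hbad⟩
  refine ⟨fun i => (f i).1, fun i => (f i).2, by simp [hf0], fun i => (hf i).1.pos, fun i => ?_,
    fun i => ?_, fun i => (hf i).1.monic, fun i => (hf i).1.irreducible, fun i => (hf i).1.dvd,
    fun i => ?_⟩ <;> obtain ⟨k, hk, he, hdvd, hdeg⟩ := (hf i).2 <;> dsimp only <;> rw [he]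
  · exact (Nat.lt_mul_iff_one_lt_right (hf i).1.pos).mpr hk
  · exact dvd_mul_right _ _
  · rw [Nat.mul_div_cancel_left _ (hf i).1.pos]
    exact ⟨hdvd, hdeg⟩

end

section

variable {F : Type*} [Field F] {P : F[X]}

theorem HasGoodHeredity.false_of_chain (hP : HasGoodHeredity P) {n k : ℕ → ℕ} {Q : ℕ → F[X]}
    (hn : ∀ i, 0 < n i) (hQ : ∀ i, Q i ≠ 0) (hQP : ∀ i, Q i ∣ expand F (n i) P)
    (hstep : ∀ i, Q (i + 1) ∣ expand F (k i) (Q i) ∧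
      (Q (i + 1)).natDegree < k i * (Q i).natDegree) : False := by
  classical
  obtain ⟨m, hm, hPm⟩ := hasGoodHeredity_iff.mp hP
  have hdesc : StrictAnti fun i => Multiset.card (normalizedFactors (expand F m (Q i))) :=
    strictAnti_nat_of_succ_lt fun i => by
      obtain ⟨hdvd, hdeg⟩ := hstep i
      have hk : 0 < k i := Nat.pos_of_ne_zero fun h => by simp [h] at hdeg
      refine card_normalizedFactors_lt_of_dvd_expand (expand_mem_heredProducts (hn i) hPm) ?_
        ((expand_eq_zero hm).not.mpr (hQ i)) hk ?_ ?_
      · rw [expand_expand_comm (n i) m]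
        exact _root_.map_dvd (expand F m) (hQP i)
      · rw [expand_expand_comm (k i) m]
        exact _root_.map_dvd (expand F m) hdvd
      · rw [natDegree_expand, natDegree_expand, ← mul_assoc]
        exact Nat.mul_lt_mul_of_pos_right hdeg hm
  exact not_strictAnti_of_wellFoundedLT _ hdesc

end

theorem stmt1_general {F : Type*} [Field F] (P : F[X]) (hm : P.Monic) (hirr : Irreducible P) :
    ¬ HasGoodHeredity P ↔
      ∃ (n : ℕ → ℕ) (Q : ℕ → F[X]),
        n 0 = 1 ∧ (∀ i, 0 < n i) ∧ (∀ i, n i < n (i + 1)) ∧ (∀ i, n i ∣ n (i + 1)) ∧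
        (∀ i, (Q i).Monic) ∧ (∀ i, Irreducible (Q i)) ∧
        (∀ i, Q i ∣ P.comp (X ^ n i)) ∧
        (∀ i, Q (i + 1) ∣ (Q i).comp (X ^ (n (i + 1) / n i)) ∧
          (Q (i + 1)).natDegree < (n (i + 1) / n i) * (Q i).natDegree) := by
  classical
  -- `expand F k p` is definitionally `p.comp (X ^ k)`.
  refine ⟨exists_chain_of_not_hasGoodHeredity hm hirr, ?_⟩
  rintro ⟨n, Q, -, hn, -, -, hQm, -, hQP, hstep⟩ hP
  exact hP.false_of_chain hn (fun i => (hQm i).ne_zero) hQP hstep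

/-- `P` fails good heredity iff there is an infinite branch of proper divisions. -/
theorem stmt1 {F : Type*} [Field F] (P : F[X]) (hm : P.Monic) (hirr : Irreducible P)
    (hX : P ≠ X) :
    ¬ HasGoodHeredity P ↔
      ∃ (n : ℕ → ℕ) (Q : ℕ → F[X]),
        n 0 = 1 ∧ (∀ i, 0 < n i) ∧ (∀ i, n i < n (i + 1)) ∧ (∀ i, n i ∣ n (i + 1)) ∧
        (∀ i, (Q i).Monic) ∧ (∀ i, Irreducible (Q i)) ∧
        (∀ i, Q i ∣ P.comp (X ^ n i)) ∧
        (∀ i, Q (i + 1) ∣ (Q i).comp (X ^ (n (i + 1) / n i)) ∧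
          (Q (i + 1)).natDegree < (n (i + 1) / n i) * (Q i).natDegree) :=
  stmt1_general P hm hirr
end

section
/- Let F be a field and let P ∈ F[X] be a monic irreducible polynomial with P ≠ X that has good heredity over F. Then for every positive integer M, the set of monic irreducible polynomials Q ∈ F[X] of degree at most M such that Q divides P(X^{n!}) for some positive integer n is finite. -/
/-!
Write `P(X^N) = ∏ Qᵢ` with every `Qᵢ` hereditarily irreducible. Once `N ∣ n!` with
`n! = N * m`, we get `P(X^{n!}) = ∏ Qᵢ(X^m)`, a product of irreducible polynomials of degree
at least `m`. Since `m` grows with `n`, an irreducible factor of degree at most `M` can only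
occur for the finitely many small `n`, and each `P(X^{n!})` has finitely many monic factors.
-/

open Polynomial

theorem Polynomial.finite_setOf_monic_dvd {D : Type*} [CommRing D] [UniqueFactorizationMonoid D]
    {p : D[X]} (hp : p ≠ 0) : {q : D[X] | q.Monic ∧ q ∣ p}.Finite :=
  Set.finite_coe_iff.mp (@Finite.of_fintype _ (fintypeSubtypeMonicDvd p hp))

theorem exists_factorial_eq_mul_of_add_lt {N M n : ℕ} (hN : 0 < N) (h : N + M < n) :
    ∃ m, M < m ∧ n.factorial = N * m := by
  obtain ⟨k, rfl⟩ : ∃ k, n = k + 1 := Nat.exists_eq_succ_of_ne_zero (by omega)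
  obtain ⟨c, hc⟩ := Nat.dvd_factorial hN (by omega : N ≤ k)
  have hc0 : 0 < c := Nat.pos_of_mul_pos_left (hc ▸ k.factorial_pos)
  refine ⟨(k + 1) * c, by nlinarith, ?_⟩
  rw [Nat.factorial_succ, hc]
  ring

section

variable {F : Type*} [Field F]

theorem HeredIrreducible.irreducible_s2 {Q : F[X]} (hQ : HeredIrreducible Q) : Irreducible Q := by
  simpa using hQ 1 one_pos

theorem HasGoodHeredity.ne_zero {P : F[X]} (hP : HasGoodHeredity P) : P ≠ 0 := by
  obtain ⟨N, -, l, hl, hPN⟩ := hP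
  rintro rfl
  rw [zero_comp, eq_comm, Multiset.prod_eq_zero_iff] at hPN
  exact (hl 0 hPN).irreducible_s2.ne_zero rfl

theorem le_natDegree_of_irreducible_dvd_prod_comp_X_pow {l : Multiset F[X]}
    (hl : ∀ q ∈ l, HeredIrreducible q) {m : ℕ} (hm : 0 < m) {Q : F[X]} (hQ : Irreducible Q)
    (hdvd : Q ∣ l.prod.comp (X ^ m)) : m ≤ Q.natDegree := by
  rw [multiset_prod_comp] at hdvd
  obtain ⟨_, hmem, hQq⟩ := hQ.prime.exists_mem_multiset_dvd hdvd
  obtain ⟨q, hq, rfl⟩ := Multiset.mem_map.mp hmem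
  have hassoc := hQ.associated_of_dvd (hl q hq m hm) hQq
  calc m ≤ q.natDegree * m := Nat.le_mul_of_pos_left m (hl q hq).irreducible_s2.natDegree_pos
    _ = (q.comp (X ^ m)).natDegree := by rw [natDegree_comp, natDegree_X_pow]
    _ ≤ Q.natDegree := natDegree_le_of_dvd hassoc.symm.dvd hQ.ne_zero

end

theorem stmt2_general {F : Type*} [Field F] (P : F[X]) (hgh : HasGoodHeredity P) (M : ℕ) :
    {Q : F[X] | Q.Monic ∧ Irreducible Q ∧ Q.natDegree ≤ M ∧
      ∃ n : ℕ, 0 < n ∧ Q ∣ P.comp (X ^ (Nat.factorial n))}.Finite := by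
  have hP := hgh.ne_zero
  obtain ⟨N, hN, l, hl, hPN⟩ := hgh
  refine ((Set.finite_Iic (N + M)).biUnion fun n _ =>
    finite_setOf_monic_dvd ((expand_ne_zero n.factorial_pos).mpr hP)).subset ?_
  rintro Q ⟨hQm, hQ, hQM, n, -, hdvd⟩
  refine Set.mem_biUnion (x := n) (Set.mem_Iic.mpr ?_) ⟨hQm, hdvd⟩
  by_contra! hn
  obtain ⟨m, hMm, hfac⟩ := exists_factorial_eq_mul_of_add_lt hN hn
  rw [← expand_eq_comp_X_pow, hfac, mul_comm, expand_mul, expand_eq_comp_X_pow,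
    expand_eq_comp_X_pow, hPN] at hdvd
  have := le_natDegree_of_irreducible_dvd_prod_comp_X_pow hl (by omega) hQ hdvd
  omega

/-- If `P` has good heredity, only finitely many monic irreducible polynomials of bounded
degree divide some `P(X^{n!})`. -/
theorem stmt2 {F : Type*} [Field F] (P : F[X]) (hm : P.Monic) (hirr : Irreducible P)
    (hX : P ≠ X) (hgh : HasGoodHeredity P) (M : ℕ) (hM : 0 < M) :
    {Q : F[X] | Q.Monic ∧ Irreducible Q ∧ Q.natDegree ≤ M ∧
      ∃ n : ℕ, 0 < n ∧ Q ∣ P.comp (X ^ (Nat.factorial n))}.Finite :=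
  stmt2_general P hgh M
end

section
/- Let F be a field and a ∈ F. (i) If a is very rootless modtor in F, then the polynomial X − a is hereditarily irreducible over F, i.e., X^n − a is irreducible over F for every positive integer n. (ii) If X − a is hereditarily irreducible over F, then a is very rootless in F. -/
/-!
For (i), induct on the prime factorisation of `n` (Capelli's argument, as in Mathlib's proof for
odd `n`): `X ^ (p * m) - C a` is irreducible once `X ^ p - C a` is and `X ^ m - x` is irreducible
over `K⟮x⟯` for a root `x` of `X ^ p - C a`. Transporting a decomposition `x = ζ * b ^ q` back to
`K` by the norm, which sends `x` to `±a` and roots of unity to roots of unity, shows that `x`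
inherits the hypothesis on `a`. Part (ii) is the easy direction: `a = g ^ n` makes `X - C g` a
factor of `X ^ n - C a`.
-/

open Polynomial

open IntermediateField in
theorem norm_adjoinSimple_gen_of_minpoly_eq_X_pow_sub_C {K E : Type*} [Field K] [Field E]
    [Algebra K E] {p : ℕ} (hp : p ≠ 0) {a : K} {x : E} (hx : minpoly K x = X ^ p - C a) :
    Algebra.norm K (AdjoinSimple.gen K x) = (-1) ^ (p + 1) * a := by
  have hint : IsIntegral K x := by
    by_contra h
    simpa [minpoly.eq_zero h, eq_comm, hp] using congr_arg natDegree hx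
  rw [← adjoin.powerBasis_gen hint, Algebra.PowerBasis.norm_gen_eq_coeff_zero_minpoly,
    adjoin.powerBasis_gen, minpoly_gen, hx, adjoin.powerBasis_dim, hx, natDegree_X_pow_sub_C]
  simp [coeff_X_pow, Ne.symm hp, pow_succ]

universe u

-- The field is quantified after `n` because the induction step changes it to `K⟮x⟯`.
theorem X_pow_sub_C_irreducible_of_forall_prime_ne_mul_pow {n : ℕ} (hn : n ≠ 0) :
    ∀ {K : Type u} [Field K] {a : K},
      (∀ p : ℕ, p.Prime → p ∣ n → ∀ ζ b : K, IsOfFinOrder ζ → a ≠ ζ * b ^ p) →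
      Irreducible (X ^ n - C a) := by
  induction n using induction_on_primes with
  | zero => exact absurd rfl hn
  | one => intro K _ a _; simpa using irreducible_X_sub_C a
  | prime_mul p m hp IH =>
    intro K _ a ha
    rw [mul_comm]
    refine X_pow_mul_sub_C_irreducible (X_pow_sub_C_irreducible_of_prime hp fun b hb ↦
      ha p hp (dvd_mul_right p m) 1 b IsOfFinOrder.one (by rw [hb, one_mul])) ?_
    intro E _ _ x hx
    refine IH (right_ne_zero_of_mul hn) fun q hq hqm ζ b hζ hb ↦ ?_
    have hnorm := norm_adjoinSimple_gen_of_minpoly_eq_X_pow_sub_C hp.ne_zero hx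
    rw [hb, map_mul, map_pow] at hnorm
    have hsign : ((-1 : K) ^ (p + 1)) ^ 2 = 1 := by
      rw [← pow_mul, mul_comm, pow_mul, neg_one_sq, one_pow]
    have hsign_fin : IsOfFinOrder ((-1 : K) ^ (p + 1)) :=
      isOfFinOrder_iff_pow_eq_one.mpr ⟨2, two_pos, hsign⟩
    refine ha q hq (dvd_mul_of_dvd_right hqm p) ((-1) ^ (p + 1) * Algebra.norm K ζ)
      (Algebra.norm K b) (hsign_fin.mul ((Algebra.norm K : _ →* K).isOfFinOrder hζ)) ?_
    linear_combination -(-1) ^ (p + 1) * hnorm - a * hsign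

/-- Very rootless modtor implies `X - a` hereditarily irreducible, which in turn implies
very rootless. -/
theorem stmt4 {F : Type*} [Field F] (a : F) :
    (VeryRootlessModtor a → HeredIrreducible (X - C a)) ∧
    (HeredIrreducible (X - C a) → VeryRootless a) := by
  have hcomp (n : ℕ) : (X - C a).comp (X ^ n) = X ^ n - C a := by simp [sub_comp]
  constructor
  · intro ha n hn
    rw [hcomp]
    exact X_pow_sub_C_irreducible_of_forall_prime_ne_mul_pow hn.ne' fun p hp _ ζ g hζ h ↦
      ha ⟨ζ, g, p, isOfFinOrder_iff_pow_eq_one.mp hζ, hp.two_le, h⟩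
  · rintro ha ⟨g, n, hn, rfl⟩
    have hirr := ha n (by omega)
    rw [hcomp] at hirr
    exact pow_ne_of_irreducible_X_pow_sub_C hirr dvd_rfl (by omega) g rfl
end

section
/- Let F be a field and let a ∈ F be an element that is neither zero nor a root of unity. (i) If a is rootless modtor in F, then the polynomial X − a has good heredity over F. (ii) If X − a has good heredity over F, then a is rootless in F. -/
open Polynomial

/-!
Let `B` bound the exponents `t` for which `ζ * a` is a `t`-th power for some root of unity `ζ`.
The roots of a monic factor `Q` of `X ^ n - a` are `n`-th roots of `a`, so `c = Q(0)` satisfies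
`(c ^ 2) ^ n = a ^ (2 deg Q)`, and Bézout turns this into `g ^ (n / gcd (2 deg Q) n) = ζ * a`.
Hence every irreducible factor of `X ^ n - a` has degree at least `n / 2B`, and `X ^ n - a` has at
most `2B` irreducible factors. Substituting `X ^ m` can only increase the number of factors, and it
leaves it unchanged exactly when each factor `Q` stays irreducible as `Q(X ^ m)`; so an `n`
maximising the number of factors of `X ^ n - a` gives good heredity.

Conversely, if `X ^ n - a = ∏ Qᵢ` with every `Qᵢ(X ^ m)` irreducible and `a = b ^ m` with `m > n`,
then `X ^ n - b` divides `∏ Qᵢ(X ^ m)`, all of whose irreducible factors have degree at least `m`.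
-/

open UniqueFactorizationMonoid

theorem exists_pow_div_gcd_eq_mul_of_pow_eq_pow {G : Type*} [CommGroup G] {a c : G} {k n : ℕ}
    (h : c ^ n = a ^ k) :
    ∃ ζ g : G, ζ ^ Nat.gcd k n = 1 ∧ g ^ (n / Nat.gcd k n) = ζ * a := by
  set d := Nat.gcd k n
  -- Bézout: `d = k u + n v`, so `g := c ^ u * a ^ v` satisfies `g ^ n = a ^ d`.
  set g : G := c ^ Nat.gcdA k n * a ^ Nat.gcdB k n
  have hg : g ^ n = a ^ d := by
    rw [← zpow_natCast, ← zpow_natCast a, Nat.gcd_eq_gcd_ab, mul_zpow, ← zpow_mul, ← zpow_mul,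
      mul_comm _ (n : ℤ), zpow_mul, zpow_natCast, h, ← zpow_natCast, ← zpow_mul, ← zpow_add]
    ring_nf
  refine ⟨g ^ (n / d) * a⁻¹, g, ?_, by group⟩
  rw [mul_pow, ← pow_mul, Nat.div_mul_cancel (Nat.gcd_dvd_right k n), hg, inv_pow,
    mul_inv_cancel]

-- `RootlessModtorElem a` says that this set is finite.
def rootExponentsModtor {M : Type*} [Monoid M] (a : M) : Set ℕ :=
  {n | 0 < n ∧ ∃ ζ g : M, IsRootOfUnityElem ζ ∧ g ^ n = ζ * a}

theorem div_gcd_mem_rootExponentsModtor {G₀ : Type*} [CommGroupWithZero G₀] {a c : G₀}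
    (ha : a ≠ 0) (hc : c ≠ 0) {k n : ℕ} (hn : 0 < n) (h : c ^ n = a ^ k) :
    n / Nat.gcd k n ∈ rootExponentsModtor a := by
  have hu : Units.mk0 c hc ^ n = Units.mk0 a ha ^ k := by ext; simpa using h
  obtain ⟨ζ, g, hζ, hg⟩ := exists_pow_div_gcd_eq_mul_of_pow_eq_pow hu
  have hd : 0 < Nat.gcd k n := Nat.gcd_pos_of_pos_right k hn
  refine ⟨Nat.div_pos (Nat.gcd_le_right (m := k) hn) hd, ζ, g, ⟨_, hd, ?_⟩, ?_⟩
  · simpa using congrArg Units.val hζ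
  · simpa using congrArg Units.val hg

theorem UniqueFactorizationMonoid.irreducible_of_card_normalizedFactors_eq_one {α : Type*}
    [CommMonoidWithZero α] [NormalizationMonoid α] [UniqueFactorizationMonoid α] {x : α}
    (hx : x ≠ 0) (h : Multiset.card (normalizedFactors x) = 1) : Irreducible x := by
  obtain ⟨r, hr⟩ := Multiset.card_eq_one.mp h
  have hassoc := prod_normalizedFactors hx
  rw [hr, Multiset.prod_singleton] at hassoc
  exact hassoc.irreducible (irreducible_of_normalized_factor r (hr ▸ Multiset.mem_singleton_self r))

theorem exists_forall_mul_eq_of_le_mul {f : ℕ → ℕ} {B : ℕ} (hB : ∀ k, 0 < k → f k ≤ B)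
    (hf : ∀ k m, 0 < k → 0 < m → f k ≤ f (k * m)) :
    ∃ n, 0 < n ∧ ∀ m, 0 < m → f (n * m) = f n := by
  have hbdd : BddAbove (f '' Set.Ioi 0) := ⟨B, by rintro _ ⟨k, hk, rfl⟩; exact hB k hk⟩
  obtain ⟨n, hn, hmax⟩ := Nat.sSup_mem (Set.image_nonempty.mpr Set.nonempty_Ioi) hbdd
  refine ⟨n, hn, fun m hm => le_antisymm ?_ (hf n m hn hm)⟩
  exact hmax ▸ le_csSup hbdd ⟨n * m, mul_pos hn hm, rfl⟩

section Field

variable {F : Type*} [Field F]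

theorem coeff_zero_sq_pow_eq_of_dvd_X_pow_sub_C {a : F} {n : ℕ} {Q : F[X]} (hQ : Q.Monic)
    (hdvd : Q ∣ X ^ n - C a) : (Q.coeff 0 ^ 2) ^ n = a ^ (2 * Q.natDegree) := by
  set K := AlgebraicClosure F
  set Q' := Q.map (algebraMap F K)
  have hroots : ∀ ρ ∈ Q'.roots, ρ ^ n = algebraMap F K a := by
    intro ρ hρ
    have := (isRoot_of_mem_roots hρ).dvd (Polynomial.map_dvd _ hdvd)
    simpa [sub_eq_zero] using this
  have hcoeff := (IsAlgClosed.splits Q').coeff_zero_eq_prod_roots_of_monic (hQ.map _)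
  have hcard := (IsAlgClosed.splits Q').natDegree_eq_card_roots
  rw [coeff_map, hQ.natDegree_map] at hcoeff
  rw [hQ.natDegree_map] at hcard
  apply (algebraMap F K).injective
  -- Squaring removes the sign in `Q(0) = (-1) ^ deg Q * ∏ ρ`.
  calc algebraMap F K ((Q.coeff 0 ^ 2) ^ n) = (Q'.roots.map fun ρ => (ρ ^ n) ^ 2).prod := by
        rw [map_pow, map_pow, hcoeff, mul_pow, ← pow_mul, mul_comm _ 2, pow_mul, neg_one_sq,
          one_pow, one_mul]
        simp_rw [← pow_mul]
        rw [Multiset.prod_map_pow, Multiset.map_id', mul_comm]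
    _ = algebraMap F K (a ^ (2 * Q.natDegree)) := by
        rw [Multiset.map_congr rfl fun ρ hρ => by rw [hroots ρ hρ], Multiset.map_const',
          Multiset.prod_replicate, hcard, map_pow, ← pow_mul, mul_comm]

theorem le_two_mul_natDegree_mul_of_dvd_X_pow_sub_C {a : F} (ha : a ≠ 0) {B : ℕ}
    (hB : B ∈ upperBounds (rootExponentsModtor a)) {n : ℕ} (hn : 0 < n) {Q : F[X]}
    (hQ : Q.Monic) (hdeg : 0 < Q.natDegree) (hdvd : Q ∣ X ^ n - C a) :
    n ≤ 2 * Q.natDegree * B := by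
  have hc : Q.coeff 0 ≠ 0 := by
    intro h0
    have := X_dvd_iff.mp ((X_dvd_iff.mpr h0).trans hdvd)
    simp [coeff_X_pow, hn.ne, ha] at this
  have hmem := div_gcd_mem_rootExponentsModtor ha (pow_ne_zero 2 hc) hn
    (coeff_zero_sq_pow_eq_of_dvd_X_pow_sub_C hQ hdvd)
  calc n = Nat.gcd (2 * Q.natDegree) n * (n / Nat.gcd (2 * Q.natDegree) n) :=
        (Nat.mul_div_cancel' (Nat.gcd_dvd_right _ _)).symm
    _ ≤ 2 * Q.natDegree * B := Nat.mul_le_mul (Nat.gcd_le_left _ (by omega)) (hB hmem)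

theorem expand_X_pow_sub_C (a : F) (k m : ℕ) :
    expand F m (X ^ k - C a) = X ^ (k * m) - C a := by
  rw [map_sub, map_pow, expand_X, expand_C, ← pow_mul, mul_comm]

section Factors

variable [DecidableEq F]

theorem Polynomial.Monic.prod_normalizedFactors {p : F[X]} (hp : p.Monic) :
    (normalizedFactors p).prod = p := by
  simpa [hp.leadingCoeff] using leadingCoeff_mul_prod_normalizedFactors p

theorem card_normalizedFactors_X_pow_sub_C_le {a : F} (ha : a ≠ 0) {B : ℕ}
    (hB : B ∈ upperBounds (rootExponentsModtor a)) {n : ℕ} (hn : 0 < n) :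
    Multiset.card (normalizedFactors (X ^ n - C a : F[X])) ≤ 2 * B := by
  have hp0 := X_pow_sub_C_ne_zero hn a
  set l := normalizedFactors (X ^ n - C a : F[X])
  have hdeg : (l.map natDegree).sum = n := by
    rw [← natDegree_multiset_prod _ (zero_notMem_normalizedFactors _),
      (monic_X_pow_sub_C a hn.ne').prod_normalizedFactors, natDegree_X_pow_sub_C]
  have hfactor : ∀ Q ∈ l, n ≤ 2 * B * Q.natDegree := by
    intro Q hQ
    obtain ⟨hirr, hmonic, hdvd⟩ := (Polynomial.mem_normalizedFactors_iff hp0).mp hQ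
    rw [mul_right_comm]
    exact le_two_mul_natDegree_mul_of_dvd_X_pow_sub_C ha hB hn hmonic hirr.natDegree_pos hdvd
  have : Multiset.card l * n ≤ 2 * B * n := by
    calc Multiset.card l * n = (l.map fun _ => n).sum := by simp
      _ ≤ (l.map fun Q => 2 * B * Q.natDegree).sum := Multiset.sum_map_le_sum_map _ _ hfactor
      _ = 2 * B * n := by rw [Multiset.sum_map_mul_left, hdeg]
  exact Nat.le_of_mul_le_mul_right this hn

theorem card_normalizedFactors_expand_s5 {p : F[X]} (hp : p.Monic) {m : ℕ} (hm : 0 < m) :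
    Multiset.card (normalizedFactors (expand F m p)) =
      ((normalizedFactors p).map fun Q =>
        Multiset.card (normalizedFactors (expand F m Q))).sum := by
  have h0 : (0 : F[X]) ∉ (normalizedFactors p).map (expand F m) := by
    simp only [Multiset.mem_map, not_exists, not_and]
    exact fun Q hQ => (expand_ne_zero hm).mpr (ne_zero_of_mem_normalizedFactors hQ)
  conv_lhs => rw [← hp.prod_normalizedFactors, map_multiset_prod,
    normalizedFactors_multiset_prod _ h0]
  exact (map_multiset_sum Multiset.cardHom _).trans (by simp [Multiset.map_map])

theorem one_le_card_normalizedFactors_expand {Q : F[X]} (hQ : Irreducible Q) {m : ℕ}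
    (hm : 0 < m) : 1 ≤ Multiset.card (normalizedFactors (expand F m Q)) := by
  have hunit : ¬IsUnit (expand F m Q) :=
    not_isUnit_of_natDegree_pos _ (by rw [natDegree_expand]; exact mul_pos hQ.natDegree_pos hm)
  exact Multiset.card_pos.mpr
    ((normalizedFactors_pos _ ((expand_ne_zero hm).mpr hQ.ne_zero)).mpr hunit).ne'

theorem card_normalizedFactors_le_expand {p : F[X]} (hp : p.Monic) {m : ℕ} (hm : 0 < m) :
    Multiset.card (normalizedFactors p) ≤ Multiset.card (normalizedFactors (expand F m p)) := by
  rw [card_normalizedFactors_expand_s5 hp hm]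
  calc Multiset.card (normalizedFactors p) = ((normalizedFactors p).map fun _ => 1).sum := by simp
    _ ≤ _ := Multiset.sum_map_le_sum_map _ _ fun Q hQ =>
      one_le_card_normalizedFactors_expand (irreducible_of_normalized_factor Q hQ) hm

theorem irreducible_expand_of_card_normalizedFactors_expand_eq {p : F[X]} (hp : p.Monic)
    {m : ℕ} (hm : 0 < m)
    (hcard : Multiset.card (normalizedFactors (expand F m p)) = Multiset.card (normalizedFactors p))
    {Q : F[X]} (hQ : Q ∈ normalizedFactors p) : Irreducible (expand F m Q) := by
  have hone : ∀ R ∈ normalizedFactors p,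
      1 ≤ Multiset.card (normalizedFactors (expand F m R)) :=
    fun R hR => one_le_card_normalizedFactors_expand (irreducible_of_normalized_factor R hR) hm
  refine irreducible_of_card_normalizedFactors_eq_one
    ((expand_ne_zero hm).mpr (ne_zero_of_mem_normalizedFactors hQ))
    (le_antisymm (not_lt.mp fun hlt => ?_) (hone Q hQ))
  have := Multiset.sum_lt_sum hone ⟨Q, hQ, hlt⟩
  rw [← card_normalizedFactors_expand_s5 hp hm, hcard] at this
  simp at this

end Factors

theorem hasGoodHeredity_X_sub_C_of_rootlessModtorElem {a : F} (ha : a ≠ 0)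
    (h : RootlessModtorElem a) : HasGoodHeredity (X - C a) := by
  classical
  obtain ⟨B, hB⟩ := h.bddAbove
  have hmonic : ∀ {k : ℕ}, 0 < k → (X ^ k - C a : F[X]).Monic := fun hk =>
    monic_X_pow_sub_C a hk.ne'
  obtain ⟨n, hn, hstable⟩ := exists_forall_mul_eq_of_le_mul
    (f := fun k => Multiset.card (normalizedFactors (X ^ k - C a : F[X])))
    (fun k hk => card_normalizedFactors_X_pow_sub_C_le ha hB hk)
    (fun k m hk hm => by
      simpa only [expand_X_pow_sub_C] using card_normalizedFactors_le_expand (hmonic hk) hm)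
  refine ⟨n, hn, normalizedFactors (X ^ n - C a), fun Q hQ m hm => ?_, ?_⟩
  · refine irreducible_expand_of_card_normalizedFactors_expand_eq (hmonic hn) hm ?_ hQ
    simpa only [expand_X_pow_sub_C] using hstable m hm
  · rw [sub_comp, X_comp, C_comp, (hmonic hn).prod_normalizedFactors]

theorem rootlessElem_of_hasGoodHeredity_X_sub_C {a : F} (h : HasGoodHeredity (X - C a)) :
    RootlessElem a := by
  obtain ⟨n, hn, l, hl, hprod⟩ := h
  refine (Set.finite_Iic n).subset fun m ⟨hm, b, hb⟩ =>
    Set.mem_Iic.mpr (not_lt.mp fun hnm => ?_)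
  have hdvd : X ^ n - C b ∣ (l.map (expand F m)).prod := by
    rw [← map_multiset_prod, ← hprod, sub_comp, X_comp, C_comp, expand_X_pow_sub_C, ← hb,
      pow_mul, C_pow]
    exact sub_dvd_pow_sub_pow _ _ m
  obtain ⟨r, hr, hrdvd⟩ := WfDvdMonoid.exists_irreducible_factor
    (not_isUnit_of_natDegree_pos _ (by rw [natDegree_X_pow_sub_C]; exact hn))
    (X_pow_sub_C_ne_zero hn b)
  obtain ⟨_, hq, hassoc⟩ := exists_associated_mem_of_dvd_prod hr.prime
    (fun _ hq => by obtain ⟨Q, hQ, rfl⟩ := Multiset.mem_map.mp hq; exact (hl Q hQ m hm).prime)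
    (hrdvd.trans hdvd)
  obtain ⟨Q, hQ, rfl⟩ := Multiset.mem_map.mp hq
  have hr_le : r.natDegree ≤ n :=
    (natDegree_le_of_dvd hrdvd (X_pow_sub_C_ne_zero hn b)).trans natDegree_X_pow_sub_C.le
  have hr_eq : r.natDegree = Q.natDegree * m := by
    rw [natDegree_eq_of_degree_eq (degree_eq_degree_of_associated hassoc), natDegree_expand]
  have hQ_pos : 0 < Q.natDegree := Nat.pos_of_mul_pos_right <| by
    rw [← natDegree_expand]; exact (hl Q hQ m hm).natDegree_pos
  have := Nat.le_mul_of_pos_left m hQ_pos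
  omega

end Field

theorem stmt5_general {F : Type*} [Field F] (a : F) (ha : a ≠ 0) :
    (RootlessModtorElem a → HasGoodHeredity (X - C a)) ∧
    (HasGoodHeredity (X - C a) → RootlessElem a) :=
  ⟨hasGoodHeredity_X_sub_C_of_rootlessModtorElem ha, rootlessElem_of_hasGoodHeredity_X_sub_C⟩

/-- Rootless modtor implies `X - a` has good heredity, which in turn implies rootless. -/
theorem stmt5 {F : Type*} [Field F] (a : F) (ha : a ≠ 0) (hru : ¬ IsRootOfUnityElem a) :
    (RootlessModtorElem a → HasGoodHeredity (X - C a)) ∧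
    (HasGoodHeredity (X - C a) → RootlessElem a) :=
  stmt5_general a ha
end

section
/- Let F be a field, let σ be any set of variables, and let E be the fraction field of the polynomial ring F[X_s : s ∈ σ] (so E is a purely transcendental extension of F). If F is rootless then E is rootless, and if F is rootless modtor then E is rootless modtor. -/
open Polynomial

/-!
Constants are root-closed in `E = Frac F[Xₛ]`: if `xⁿ` is a nonzero constant, then `x` is integral
over the integrally closed ring `F[Xₛ]`, so it is a polynomial dividing a unit, hence a constant.
Thus roots of elements of `F` (and all roots of unity of `E`) already lie in `F`. A nonconstant
`a ∈ E`, written as a reduced fraction `r / s` in the UFD `F[Xₛ]`, has a prime `p` with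
`v_p(a) = v_p(r) - v_p(s) ≠ 0`, and `gⁿ = ζ a` with `ζ` a unit forces `n ∣ v_p(a)`.
-/

theorem IsRootOfUnityElem.map {M N G : Type*} [Monoid M] [Monoid N] [FunLike G M N]
    [MonoidHomClass G M N] (f : G) {a : M} (h : IsRootOfUnityElem a) : IsRootOfUnityElem (f a) :=
  let ⟨n, hn, ha⟩ := h
  ⟨n, hn, by rw [← map_pow, ha, map_one]⟩

theorem RootlessModtorElem.rootlessElem {K : Type*} [Field K] {a : K} (h : RootlessModtorElem a) :
    RootlessElem a :=
  h.subset fun _ ⟨hn, x, hx⟩ => ⟨hn, 1, x, ⟨1, one_pos, one_pow 1⟩, by rw [hx, one_mul]⟩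

section RootClosed

variable {F E : Type*} [Field F] [Field E] (φ : F →+* E)

theorem RootlessElem.map (hφ : ∀ (x : E) (n : ℕ), 0 < n → x ^ n ∈ Set.range φ → x ∈ Set.range φ)
    {u : F} (hu : RootlessElem u) : RootlessElem (φ u) := by
  refine hu.subset ?_
  rintro n ⟨hn, x, hx⟩
  obtain ⟨c, rfl⟩ := hφ x n hn ⟨u, hx.symm⟩
  exact ⟨hn, c, φ.injective (by rw [map_pow, hx])⟩

theorem RootlessModtorElem.map
    (hφ : ∀ (x : E) (n : ℕ), 0 < n → x ^ n ∈ Set.range φ → x ∈ Set.range φ)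
    {u : F} (hu : RootlessModtorElem u) : RootlessModtorElem (φ u) := by
  refine hu.subset ?_
  rintro n ⟨hn, ζ, g, ⟨m, hm, hζ⟩, hg⟩
  obtain ⟨w, rfl⟩ := hφ ζ m hm ⟨1, by rw [hζ, map_one]⟩
  obtain ⟨c, rfl⟩ := hφ g n hn ⟨w * u, by rw [hg, map_mul]⟩
  exact ⟨hn, w, c, ⟨m, hm, φ.injective (by rw [map_pow, hζ, map_one])⟩,
    φ.injective (by rw [map_pow, hg, map_mul])⟩

end RootClosed

theorem dvd_multiplicity_sub_of_associated {α : Type*} [CommMonoidWithZero α] [IsCancelMulZero α]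
    [WfDvdMonoid α] {p a b c d : α} {n : ℕ} (hp : Prime p) (ha : a ≠ 0) (hb : b ≠ 0) (hc : c ≠ 0)
    (hd : d ≠ 0) (h : Associated (a ^ n * b) (c * d ^ n)) :
    (n : ℤ) ∣ multiplicity p c - multiplicity p b := by
  have hfin {x : α} (hx : x ≠ 0) : FiniteMultiplicity p x := .of_prime_left hp hx
  have key := multiplicity_eq_of_associated_right (a := p) h
  rw [multiplicity_mul hp (hfin (mul_ne_zero (pow_ne_zero n ha) hb)),
    multiplicity_mul hp (hfin (mul_ne_zero hc (pow_ne_zero n hd))),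
    (hfin ha).multiplicity_pow hp, (hfin hd).multiplicity_pow hp] at key
  zify at key
  exact ⟨multiplicity p a - multiplicity p d, by linear_combination -key⟩

theorem IsIntegrallyClosed.exists_units_algebraMap_eq_of_pow_eq {R K : Type*} [CommRing R]
    [IsDomain R] [IsIntegrallyClosed R] [Field K] [Algebra R K] [IsFractionRing R K] {x : K}
    {n : ℕ} (hn : 0 < n) {u : Rˣ} (h : x ^ n = algebraMap R K u) :
    ∃ v : Rˣ, algebraMap R K v = x := by
  obtain ⟨y, rfl⟩ := exists_algebraMap_eq_of_isIntegral_pow hn (h ▸ isIntegral_algebraMap)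
  have hy : y ^ n = u := IsFractionRing.injective R K (by rw [map_pow, h])
  exact ⟨(isUnit_pow_iff hn.ne').mp (hy ▸ u.isUnit) |>.unit, rfl⟩

namespace IsFractionRing

variable {R K : Type*} [CommRing R] [IsDomain R] [UniqueFactorizationMonoid R] [Field K]
  [Algebra R K] [IsFractionRing R K]

theorem exists_prime_multiplicity_num_ne_den {a : K} (ha0 : a ≠ 0)
    (ha : ∀ u : Rˣ, algebraMap R K u ≠ a) :
    ∃ p : R, Prime p ∧ multiplicity p (num R a) ≠ multiplicity p (den R a : R) := by
  have hr0 : num R a ≠ 0 := (num_eq_zero a).not.mpr ha0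
  have hs0 : (den R a : R) ≠ 0 := nonZeroDivisors.coe_ne_zero _
  have hrs : ¬ IsUnit (num R a * den R a) := by
    intro hu
    obtain ⟨hr, hs⟩ := IsUnit.mul_iff.mp hu
    refine ha (hr.unit * hs.unit⁻¹) ?_
    rw [Units.val_mul, map_mul, map_units_inv, IsUnit.unit_spec, IsUnit.unit_spec,
      ← div_eq_mul_inv, mk'_num_den']
  obtain ⟨p, hirr, hdvd⟩ := WfDvdMonoid.exists_irreducible_factor hrs (mul_ne_zero hr0 hs0)
  have hp := hirr.prime
  have hcop := num_den_reduced R a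
  refine ⟨p, hp, ?_⟩
  rcases hp.dvd_or_dvd hdvd with h | h
  · rw [multiplicity_eq_zero.mpr fun h' => hp.not_isUnit (hcop h h')]
    exact multiplicity_ne_zero.mpr h
  · rw [multiplicity_eq_zero.mpr fun h' => hp.not_isUnit (hcop h' h)]
    exact (multiplicity_ne_zero.mpr h).symm

theorem dvd_multiplicity_num_sub_den {a g : K} {u : Rˣ} {n : ℕ} (ha : a ≠ 0) (hn : n ≠ 0)
    (h : g ^ n = algebraMap R K u * a) {p : R} (hp : Prime p) :
    (n : ℤ) ∣ multiplicity p (num R a) - multiplicity p (den R a : R) := by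
  have hg : g ≠ 0 := by
    rintro rfl
    simp [zero_pow hn, ha] at h
  refine dvd_multiplicity_sub_of_associated hp ((num_eq_zero g).not.mpr hg)
    (nonZeroDivisors.coe_ne_zero _) ((num_eq_zero a).not.mpr ha)
    (nonZeroDivisors.coe_ne_zero (den R g)) (.symm ⟨u, FaithfulSMul.algebraMap_injective R K ?_⟩)
  have hgnd := (num_mul_den_eq_num_iff_eq (A := R) (x := g)).mpr rfl
  have hand := (num_mul_den_eq_num_iff_eq (A := R) (x := a)).mpr rfl
  simp only [map_mul, map_pow, ← hgnd, ← hand, mul_pow, h]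
  ring

theorem rootlessModtorElem_of_forall_units_ne {a : K} (ha0 : a ≠ 0)
    (ha : ∀ u : Rˣ, algebraMap R K u ≠ a) : RootlessModtorElem a := by
  obtain ⟨p, hp, hne⟩ := exists_prime_multiplicity_num_ne_den ha0 ha
  set k : ℤ := multiplicity p (num R a) - multiplicity p (den R a : R)
  have hk : k ≠ 0 := sub_ne_zero.mpr (by exact_mod_cast hne)
  refine (Set.finite_Iic k.natAbs).subset ?_
  rintro n ⟨hn, ζ, g, ⟨m, hm, hζ⟩, hg⟩
  obtain ⟨v, rfl⟩ := IsIntegrallyClosed.exists_units_algebraMap_eq_of_pow_eq (R := R) hm (u := 1)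
    (by rw [hζ, Units.val_one, map_one])
  exact Nat.le_of_dvd (Int.natAbs_pos.mpr hk)
    (Int.natCast_dvd.mp (dvd_multiplicity_num_sub_den ha0 hn.ne' hg hp))

end IsFractionRing

namespace MvPolynomial

variable {F σ : Type*} [Field F]

theorem algebraMap_fractionRing_units_mem_range (u : (MvPolynomial σ F)ˣ) :
    algebraMap _ (FractionRing (MvPolynomial σ F)) (u : MvPolynomial σ F) ∈
      Set.range (algebraMap F _) := by
  obtain ⟨d, -, hd⟩ := isUnit_iff_eq_C_of_isReduced.mp u.isUnit
  exact ⟨d, by rw [hd, IsScalarTower.algebraMap_apply F (MvPolynomial σ F), algebraMap_eq]⟩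

theorem mem_range_of_pow_mem_range_fractionRing {x : FractionRing (MvPolynomial σ F)} {n : ℕ}
    (hn : 0 < n) (h : x ^ n ∈ Set.range (algebraMap F _)) : x ∈ Set.range (algebraMap F _) := by
  obtain ⟨c, hc⟩ := h
  rcases eq_or_ne c 0 with rfl | hc0
  · exact ⟨0, by rw [map_zero, eq_comm, ← pow_eq_zero_iff hn.ne', ← hc, map_zero]⟩
  obtain ⟨v, rfl⟩ := IsIntegrallyClosed.exists_units_algebraMap_eq_of_pow_eq hn
    (u := (hc0.isUnit.map C).unit)
    (by rw [IsUnit.unit_spec, ← hc, IsScalarTower.algebraMap_apply F (MvPolynomial σ F),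
      algebraMap_eq])
  exact algebraMap_fractionRing_units_mem_range v

end MvPolynomial

/-- Purely transcendental extensions preserve rootlessness and rootless-modtorness. -/
theorem stmt11 {F : Type*} [Field F] (σ : Type*) :
    (RootlessField F → RootlessField (FractionRing (MvPolynomial σ F))) ∧
    (RootlessModtorField F → RootlessModtorField (FractionRing (MvPolynomial σ F))) := by
  have hclosed (x : FractionRing (MvPolynomial σ F)) (n : ℕ) (hn : 0 < n) :
      x ^ n ∈ Set.range (algebraMap F _) → x ∈ Set.range (algebraMap F _) :=
    MvPolynomial.mem_range_of_pow_mem_range_fractionRing hn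
  have hunits {a : FractionRing (MvPolynomial σ F)} (ha : a ∉ Set.range (algebraMap F _))
      (u : (MvPolynomial σ F)ˣ) : algebraMap _ _ (u : MvPolynomial σ F) ≠ a :=
    fun h => ha (h ▸ MvPolynomial.algebraMap_fractionRing_units_mem_range u)
  refine ⟨fun hF a ha0 ha => ?_, fun hF a ha0 ha => ?_⟩
  · by_cases hmem : a ∈ Set.range (algebraMap F _)
    · obtain ⟨u, rfl⟩ := hmem
      exact (hF u (ne_zero_of_map ha0) (mt (IsRootOfUnityElem.map _) ha)).map _ hclosed
    · exact (IsFractionRing.rootlessModtorElem_of_forall_units_ne ha0 (hunits hmem)).rootlessElem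
  · by_cases hmem : a ∈ Set.range (algebraMap F _)
    · obtain ⟨u, rfl⟩ := hmem
      exact (hF u (ne_zero_of_map ha0) (mt (IsRootOfUnityElem.map _) ha)).map _ hclosed
    · exact IsFractionRing.rootlessModtorElem_of_forall_units_ne ha0 (hunits hmem)
end
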